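/- arXiv:2509.11785 — 2 statements merged into one kernel-verified Lean document; each statement's English description precedes it below -/
import Mathlib

section
/- Let ℐ : 𝒪(X) → CP(𝒜, B(ℋ)) be a unital CP instrument with minimal bi-dilation quadruple (𝒦, π, E, V), and let P₁ denote the orthogonal projection of 𝒦 onto 𝒦₁ = [π(𝒜)V(ℋ)]. Suppose that the CP marginal φ_ℐ is an extreme point of the convex set of unital completely positive maps from 𝒜 to B(ℋ) and the POVM marginal μ_ℐ is a projection-valued (spectral) measure. Then P₁E(A)P₁ is a projection for every A ∈ 𝒪(X); consequently the quadruple (𝒦₁, P₁πP₁, P₁EP₁, V) is itself a minimal bi-dilation of ℐ. -/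
open scoped InnerProductSpace ComplexOrder
open Function

noncomputable section

/-- A linear map `φ : A →ₗ[ℂ] B(H)` is completely positive if for all `n`, `a : Fin n → A`
and `h : Fin n → H` one has `0 ≤ ∑ i j, ⟪h i, φ(aᵢ* aⱼ) (h j)⟫`. -/
def IsCompletelyPositive {A H : Type*} [NormedRing A] [StarRing A] [NormedAlgebra ℂ A]
    [NormedAddCommGroup H] [InnerProductSpace ℂ H]
    (φ : A →ₗ[ℂ] (H →L[ℂ] H)) : Prop :=
  ∀ (n : ℕ) (a : Fin n → A) (h : Fin n → H),
    0 ≤ ∑ i, ∑ j, (inner ℂ (h i) (φ (star (a i) * a j) (h j)) : ℂ)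

/-- A CP instrument on a measurable space `X` with values in `CP(A, B(H))`:
each `ℐ(s)` is completely positive and `s ↦ ⟪h, ℐ(s)(a) k⟫` is countably additive. -/
structure CPInstrument (X : Type*) [MeasurableSpace X] (A : Type*) (H : Type*)
    [NormedRing A] [StarRing A] [NormedAlgebra ℂ A]
    [NormedAddCommGroup H] [InnerProductSpace ℂ H] where
  toFun : Set X → A →ₗ[ℂ] (H →L[ℂ] H)
  cp : ∀ s : Set X, MeasurableSet s → IsCompletelyPositive (toFun s)
  countably_additive : ∀ (a : A) (h k : H) (s : ℕ → Set X),
    (∀ n, MeasurableSet (s n)) → Pairwise (Disjoint on s) →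
    HasSum (fun n => (inner ℂ h (toFun (s n) a k) : ℂ)) (inner ℂ h (toFun (⋃ n, s n) a k))

/-- A CP instrument is unital (normalized) if `ℐ(X)(1) = I`. -/
def CPInstrument.IsUnital {X A H : Type*} [MeasurableSpace X] [NormedRing A] [StarRing A]
    [NormedAlgebra ℂ A] [NormedAddCommGroup H] [InnerProductSpace ℂ H]
    (J : CPInstrument X A H) : Prop :=
  J.toFun Set.univ 1 = 1

/-- A projection-valued (spectral) measure on `X` acting on `K`. -/
structure IsPVM {X K : Type*} [MeasurableSpace X] [NormedAddCommGroup K]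
    [InnerProductSpace ℂ K] [CompleteSpace K] (E : Set X → K →L[ℂ] K) : Prop where
  selfAdjoint : ∀ s : Set X, MeasurableSet s → IsSelfAdjoint (E s)
  idempotent : ∀ s : Set X, MeasurableSet s → E s * E s = E s
  map_univ : E Set.univ = 1
  countably_additive : ∀ (h k : K) (s : ℕ → Set X),
    (∀ n, MeasurableSet (s n)) → Pairwise (Disjoint on s) →
    HasSum (fun n => (inner ℂ h (E (s n) k) : ℂ)) (inner ℂ h (E (⋃ n, s n) k))

/-- `(K, π, E, V)` is a minimal bi-dilation of the CP instrument `J`: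
`E` is a spectral measure commuting with the unital *-homomorphism `π`,
`J(s)(a) = V* π(a) E(s) V`, and `[π(A) E(𝒪(X)) V H] = K`. -/
structure IsMinimalBiDilation {X A H K : Type*} [MeasurableSpace X]
    [NormedRing A] [StarRing A] [NormedAlgebra ℂ A]
    [NormedAddCommGroup H] [InnerProductSpace ℂ H] [CompleteSpace H]
    [NormedAddCommGroup K] [InnerProductSpace ℂ K] [CompleteSpace K]
    (J : CPInstrument X A H) (π : A →⋆ₐ[ℂ] (K →L[ℂ] K))
    (E : Set X → K →L[ℂ] K) (V : H →L[ℂ] K) : Prop where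
  pvm : IsPVM E
  commutes : ∀ (s : Set X) (a : A), MeasurableSet s → E s * π a = π a * E s
  dilation : ∀ (s : Set X) (a : A), MeasurableSet s →
    J.toFun s a = (ContinuousLinearMap.adjoint V).comp ((π a * E s).comp V)
  minimal : (Submodule.span ℂ {y : K | ∃ (a : A) (s : Set X) (h : H),
      MeasurableSet s ∧ y = π a (E s (V h))}).topologicalClosure = ⊤

section ConvexityDefs

variable {X A H : Type*} [MeasurableSpace X] [NormedRing A] [StarRing A]
    [NormedAlgebra ℂ A] [NormedAddCommGroup H] [InnerProductSpace ℂ H] [CompleteSpace H]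

/-- `J'` is dominated by `J` if `J(s) - J'(s)` is completely positive for every measurable `s`. -/
def CPInstrument.Dominates (J J' : CPInstrument X A H) : Prop :=
  ∀ s : Set X, MeasurableSet s → IsCompletelyPositive (J.toFun s - J'.toFun s)

/-- A CP instrument is pure if every CP instrument it dominates is of the form `t • J`
for some `t ∈ [0,1]`. -/
def CPInstrument.IsPure (J : CPInstrument X A H) : Prop :=
  ∀ J' : CPInstrument X A H, J.Dominates J' →
    ∃ t : ℝ, 0 ≤ t ∧ t ≤ 1 ∧ ∀ s : Set X, MeasurableSet s → J'.toFun s = (t : ℂ) • J.toFun s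

/-- Extreme point of the convex set `I_H(X, A)` of unital CP instruments. -/
def CPInstrument.IsExtreme (J : CPInstrument X A H) : Prop :=
  J.IsUnital ∧ ∀ (J₁ J₂ : CPInstrument X A H) (t : ℝ), J₁.IsUnital → J₂.IsUnital →
    0 < t → t < 1 →
    (∀ s : Set X, MeasurableSet s →
      J.toFun s = (t : ℂ) • J₁.toFun s + ((1 - t : ℝ) : ℂ) • J₂.toFun s) →
    ∀ s : Set X, MeasurableSet s → J₁.toFun s = J.toFun s ∧ J₂.toFun s = J.toFun s

/-- C*-extreme point of the set `I_H(X, A)` of unital CP instruments: every proper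
C*-convex combination representing `J` consists of instruments unitarily equivalent to `J`. -/
def CPInstrument.IsCstarExtreme (J : CPInstrument X A H) : Prop :=
  J.IsUnital ∧ ∀ (n : ℕ) (Js : Fin n → CPInstrument X A H) (T : Fin n → H →L[ℂ] H),
    (∀ i, (Js i).IsUnital) → (∀ i, IsUnit (T i)) →
    (∑ i, ContinuousLinearMap.adjoint (T i) * T i) = 1 →
    (∀ (s : Set X) (a : A), MeasurableSet s →
      J.toFun s a = ∑ i, ContinuousLinearMap.adjoint (T i) * ((Js i).toFun s a) * T i) →
    ∀ i, ∃ U : H →L[ℂ] H,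
      ContinuousLinearMap.adjoint U * U = 1 ∧ U * ContinuousLinearMap.adjoint U = 1 ∧
      ∀ (s : Set X) (a : A), MeasurableSet s →
        (Js i).toFun s a = ContinuousLinearMap.adjoint U * (J.toFun s a) * U

end ConvexityDefs

section UCPExtreme

variable {A H : Type*} [NormedRing A] [StarRing A] [NormedAlgebra ℂ A]
    [NormedAddCommGroup H] [InnerProductSpace ℂ H]

/-- A unital completely positive map. -/
def IsUCPMap (φ : A →ₗ[ℂ] (H →L[ℂ] H)) : Prop :=
  IsCompletelyPositive φ ∧ φ 1 = 1

/-- Extreme point of the convex set of unital completely positive maps. -/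
def IsExtremeUCPMap (φ : A →ₗ[ℂ] (H →L[ℂ] H)) : Prop :=
  IsUCPMap φ ∧ ∀ (ψ₁ ψ₂ : A →ₗ[ℂ] (H →L[ℂ] H)) (t : ℝ), IsUCPMap ψ₁ → IsUCPMap ψ₂ →
    0 < t → t < 1 → φ = (t : ℂ) • ψ₁ + ((1 - t : ℝ) : ℂ) • ψ₂ → ψ₁ = φ ∧ ψ₂ = φ

end UCPExtreme


/-! `μ(s) = V*E(s)V` is a projection and `V` is an isometry, so `‖E(s)Vh - Vμ(s)h‖² = 0`, i.e.
`E(s)V = Vμ(s)`. Hence `E(s)`, like every `π(a)`, maps the generators `π(b)Vh` of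
`𝒦₁ = [π(𝒜)Vℋ]` back into `𝒦₁`. Both families are closed under adjoints, so `𝒦₁` reduces them
and `P₁` commutes with all `π(a)` and `E(s)`: `P₁E(s)P₁ = E(s)P₁` is a product of commuting
projections, and since `P₁V = V` the compressed quadruple reproduces `ℐ` and is minimal. -/

open ContinuousLinearMap Module.End

section Algebra

variable {R : Type*} {p q s t : R}

theorem IsIdempotentElem.conj_eq_mul_of_commute [Semigroup R] (hp : IsIdempotentElem p)
    (h : Commute p t) : p * t * p = t * p := by
  rw [h.eq, mul_assoc, hp.eq]

theorem IsIdempotentElem.conj_mul_conj_of_commute [Semigroup R] (hp : IsIdempotentElem p)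
    (hs : Commute p s) (ht : Commute p t) : p * s * p * (p * t * p) = s * t * p := by
  rw [hp.conj_eq_mul_of_commute hs, hp.conj_eq_mul_of_commute ht, mul_assoc, ← mul_assoc p,
    hp.conj_eq_mul_of_commute ht, ← mul_assoc]

theorem IsIdempotentElem.commute_conj_of_commute [Semigroup R] (hp : IsIdempotentElem p)
    (hs : Commute p s) (ht : Commute p t) (hst : Commute s t) :
    Commute (p * s * p) (p * t * p) := by
  rw [hp.conj_eq_mul_of_commute hs, hp.conj_eq_mul_of_commute ht]
  exact (hst.mul_right hs.symm).mul_left (ht.mul_right (Commute.refl p))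

theorem IsStarProjection.conj_of_commute [Semiring R] [StarRing R]
    (hp : IsStarProjection p) (hq : IsStarProjection q) (h : Commute p q) :
    IsStarProjection (p * q * p) := by
  rw [hp.isIdempotentElem.conj_eq_mul_of_commute h]
  exact hq.mul hp h.symm

theorem IsStarProjection.commute_of_conj_eq [Ring R] [StarRing R]
    (hp : IsStarProjection p) (ht : p * t * p = t * p) (hst : p * star t * p = star t * p) :
    Commute p t := by
  have : p * t * p = p * t := by
    simpa [mul_assoc, hp.isSelfAdjoint.star_eq] using congr(star $hst)
  exact this.symm.trans ht

end Algebra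

theorem Submodule.topologicalClosure_span_mem_invtSubmodule {R M : Type*} [Semiring R]
    [TopologicalSpace R] [TopologicalSpace M] [AddCommMonoid M] [Module R M]
    [ContinuousSMul R M] [ContinuousAdd M] {T : M →L[R] M} {S : Set M}
    (hT : ∀ x ∈ S, T x ∈ Submodule.span R S) :
    (Submodule.span R S).topologicalClosure ∈ invtSubmodule (T : M →ₗ[R] M) :=
  Submodule.topologicalClosure_mem_invtSubmodule <|
    (mem_invtSubmodule _).mpr <| Submodule.span_le.mpr hT

section Hilbert

variable {H K : Type*} [NormedAddCommGroup H] [InnerProductSpace ℂ H] [CompleteSpace H]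
    [NormedAddCommGroup K] [InnerProductSpace ℂ K] [CompleteSpace K]

theorem ContinuousLinearMap.commute_of_range_mem_invtSubmodule {P T : K →L[ℂ] K}
    (hP : IsStarProjection P)
    (hT : LinearMap.range (P : K →ₗ[ℂ] K) ∈ invtSubmodule (T : K →ₗ[ℂ] K))
    (hT' : LinearMap.range (P : K →ₗ[ℂ] K) ∈ invtSubmodule (adjoint T : K →ₗ[ℂ] K)) :
    Commute P T := by
  refine hP.commute_of_conj_eq ?_ ?_
  · exact hP.isIdempotentElem.conj_eq_of_range_mem_invtSubmodule hT
  · rw [star_eq_adjoint]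
    exact hP.isIdempotentElem.conj_eq_of_range_mem_invtSubmodule hT'

theorem ContinuousLinearMap.comp_eq_comp_of_compression_isStarProjection {V : H →L[ℂ] K}
    {E : K →L[ℂ] K} {Q : H →L[ℂ] H} (hV : adjoint V ∘L V = 1) (hE : IsStarProjection E)
    (hQ : IsStarProjection Q) (hEQ : adjoint V ∘L E ∘L V = Q) :
    E ∘L V = V ∘L Q := by
  have hEE : E ∘L E = E := hE.isIdempotentElem
  have hQQ : Q ∘L Q = Q := hQ.isIdempotentElem
  have hW : adjoint (E ∘L V - V ∘L Q) ∘L (E ∘L V - V ∘L Q) = 0 := by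
    have h1 : adjoint V ∘L E ∘L E ∘L V = Q := by rw [← comp_assoc E E V, hEE, hEQ]
    have h2 : adjoint V ∘L E ∘L V ∘L Q = Q := by
      rw [← comp_assoc E V Q, ← comp_assoc, hEQ, hQQ]
    have h3 : Q ∘L adjoint V ∘L E ∘L V = Q := by rw [hEQ, hQQ]
    have h4 : Q ∘L adjoint V ∘L V ∘L Q = Q := by
      rw [← comp_assoc (adjoint V) V Q, hV, one_def, id_comp, hQQ]
    simp only [map_sub, adjoint_comp, hQ.isSelfAdjoint.adjoint_eq, hE.isSelfAdjoint.adjoint_eq,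
      sub_comp, comp_sub, comp_assoc, h1, h2, h3, h4, sub_self]
  rw [← sub_eq_zero]
  ext x
  have hx := apply_norm_sq_eq_inner_adjoint_left (E ∘L V - V ∘L Q) x
  rw [hW] at hx
  simpa using hx

end Hilbert

section CyclicSubspace

variable {A H K : Type*} [NormedRing A] [StarRing A] [NormedAlgebra ℂ A]
    [NormedAddCommGroup H] [NormedSpace ℂ H]
    [NormedAddCommGroup K] [InnerProductSpace ℂ K] [CompleteSpace K]

/-- `[π(𝒜)Vℋ]`. -/
def cyclicSubspace (π : A →⋆ₐ[ℂ] (K →L[ℂ] K)) (V : H →L[ℂ] K) : Submodule ℂ K :=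
  (Submodule.span ℂ {y : K | ∃ (a : A) (h : H), y = π a (V h)}).topologicalClosure

theorem apply_mem_cyclicSubspace (π : A →⋆ₐ[ℂ] (K →L[ℂ] K)) (V : H →L[ℂ] K) (h : H) :
    V h ∈ cyclicSubspace π V :=
  subset_closure (Submodule.subset_span ⟨1, h, by simp⟩)

theorem cyclicSubspace_mem_invtSubmodule (π : A →⋆ₐ[ℂ] (K →L[ℂ] K)) (V : H →L[ℂ] K) (a : A) :
    cyclicSubspace π V ∈ invtSubmodule (π a : K →ₗ[ℂ] K) := by
  refine Submodule.topologicalClosure_span_mem_invtSubmodule ?_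
  rintro _ ⟨b, h, rfl⟩
  exact Submodule.subset_span ⟨a * b, h, by simp⟩

variable {π : A →⋆ₐ[ℂ] (K →L[ℂ] K)} {V : H →L[ℂ] K} {P : K →L[ℂ] K}

theorem commute_apply_of_range_eq_cyclicSubspace (hP : IsStarProjection P)
    (hK : LinearMap.range (P : K →ₗ[ℂ] K) = cyclicSubspace π V) (a : A) : Commute P (π a) :=
  commute_of_range_mem_invtSubmodule hP (hK ▸ cyclicSubspace_mem_invtSubmodule π V a) <| by
    rw [← star_eq_adjoint, ← map_star, hK]
    exact cyclicSubspace_mem_invtSubmodule π V _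

theorem apply_eq_of_range_eq_cyclicSubspace (hP : IsIdempotentElem P)
    (hK : LinearMap.range (P : K →ₗ[ℂ] K) = cyclicSubspace π V) (h : H) : P (V h) = V h :=
  (LinearMap.IsIdempotentElem.mem_range_iff hP.toLinearMap).mp <|
    hK ▸ apply_mem_cyclicSubspace π V h

end CyclicSubspace

namespace IsMinimalBiDilation

variable {X A H K : Type*} [MeasurableSpace X] [NormedRing A] [StarRing A] [NormedAlgebra ℂ A]
    [NormedAddCommGroup H] [InnerProductSpace ℂ H] [CompleteSpace H]
    [NormedAddCommGroup K] [InnerProductSpace ℂ K] [CompleteSpace K]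
    {J : CPInstrument X A H} {π : A →⋆ₐ[ℂ] (K →L[ℂ] K)} {E : Set X → K →L[ℂ] K} {V : H →L[ℂ] K}

theorem adjoint_comp_self (hdil : IsMinimalBiDilation J π E V) (hu : J.IsUnital) :
    adjoint V ∘L V = 1 := by
  have h := hdil.dilation Set.univ 1 MeasurableSet.univ
  rw [hu, map_one, hdil.pvm.map_univ, one_mul] at h
  exact h.symm

theorem isStarProjection (hdil : IsMinimalBiDilation J π E V) {s : Set X}
    (hs : MeasurableSet s) : IsStarProjection (E s) :=
  ⟨hdil.pvm.idempotent s hs, hdil.pvm.selfAdjoint s hs⟩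

theorem apply_apply_eq_povm (hdil : IsMinimalBiDilation J π E V) (hu : J.IsUnital)
    {s : Set X} (hs : MeasurableSet s) (hμ : IsStarProjection (J.toFun s 1)) (h : H) :
    E s (V h) = V (J.toFun s 1 h) := by
  refine DFunLike.congr_fun (comp_eq_comp_of_compression_isStarProjection
    (hdil.adjoint_comp_self hu) (hdil.isStarProjection hs) hμ ?_) h
  rw [hdil.dilation s 1 hs, map_one, one_mul]

theorem cyclicSubspace_mem_invtSubmodule (hdil : IsMinimalBiDilation J π E V) (hu : J.IsUnital)
    {s : Set X} (hs : MeasurableSet s) (hμ : IsStarProjection (J.toFun s 1)) :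
    cyclicSubspace π V ∈ invtSubmodule (E s : K →ₗ[ℂ] K) := by
  refine Submodule.topologicalClosure_span_mem_invtSubmodule ?_
  rintro _ ⟨b, h, rfl⟩
  refine Submodule.subset_span ⟨b, J.toFun s 1 h, ?_⟩
  rw [← mul_apply_eq_comp, hdil.commutes s b hs, mul_apply_eq_comp,
    hdil.apply_apply_eq_povm hu hs hμ]

theorem commute_of_range_eq_cyclicSubspace (hdil : IsMinimalBiDilation J π E V)
    (hu : J.IsUnital) {s : Set X} (hs : MeasurableSet s) (hμ : IsStarProjection (J.toFun s 1))
    {P : K →L[ℂ] K} (hP : IsStarProjection P)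
    (hK : LinearMap.range (P : K →ₗ[ℂ] K) = cyclicSubspace π V) : Commute P (E s) := by
  have hinv := hdil.cyclicSubspace_mem_invtSubmodule hu hs hμ
  refine commute_of_range_mem_invtSubmodule hP (hK ▸ hinv) ?_
  rwa [(hdil.isStarProjection hs).isSelfAdjoint.adjoint_eq, hK]

end IsMinimalBiDilation

theorem CPInstrument.compression_is_spectral_of_extreme_marginals_general
    {X A H K : Type*} [MeasurableSpace X]
    [NormedRing A] [StarRing A] [NormedAlgebra ℂ A]
    [NormedAddCommGroup H] [InnerProductSpace ℂ H] [CompleteSpace H]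
    [NormedAddCommGroup K] [InnerProductSpace ℂ K] [CompleteSpace K]
    (J : CPInstrument X A H) (hu : J.IsUnital)
    (π : A →⋆ₐ[ℂ] (K →L[ℂ] K)) (E : Set X → K →L[ℂ] K) (V : H →L[ℂ] K)
    (hdil : IsMinimalBiDilation J π E V)
    (P₁ : K →L[ℂ] K)
    (hP₁sa : IsSelfAdjoint P₁) (hP₁idem : P₁ * P₁ = P₁)
    (hP₁range : LinearMap.range (P₁ : K →ₗ[ℂ] K) =
      (Submodule.span ℂ {y : K | ∃ (a : A) (h : H), y = π a (V h)}).topologicalClosure)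
    (hspec : ∀ s : Set X, MeasurableSet s → IsSelfAdjoint (J.toFun s 1) ∧
      (J.toFun s 1) * (J.toFun s 1) = J.toFun s 1) :
    (∀ s : Set X, MeasurableSet s → IsSelfAdjoint (P₁ * E s * P₁) ∧
      (P₁ * E s * P₁) * (P₁ * E s * P₁) = P₁ * E s * P₁) ∧
    (∀ (s : Set X) (a : A), MeasurableSet s →
      J.toFun s a = (ContinuousLinearMap.adjoint V).comp
        (((P₁ * π a * P₁) * (P₁ * E s * P₁)).comp V)) ∧
    (∀ (s : Set X) (a : A), MeasurableSet s →
      (P₁ * E s * P₁) * (P₁ * π a * P₁) = (P₁ * π a * P₁) * (P₁ * E s * P₁)) ∧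
    ((Submodule.span ℂ {y : K | ∃ (a : A) (s : Set X) (h : H), MeasurableSet s ∧
        y = (P₁ * π a * P₁) ((P₁ * E s * P₁) (V h))}).topologicalClosure
      = LinearMap.range (P₁ : K →ₗ[ℂ] K)) := by
  have hP : IsStarProjection P₁ := ⟨hP₁idem, hP₁sa⟩
  have hK₁ : LinearMap.range (P₁ : K →ₗ[ℂ] K) = cyclicSubspace π V := hP₁range
  have hμ : ∀ s, MeasurableSet s → IsStarProjection (J.toFun s 1) :=
    fun s hs => ⟨(hspec s hs).2, (hspec s hs).1⟩
  have hPπ : ∀ a, Commute P₁ (π a) := commute_apply_of_range_eq_cyclicSubspace hP hK₁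
  have hPE : ∀ s, MeasurableSet s → Commute P₁ (E s) := fun s hs =>
    hdil.commute_of_range_eq_cyclicSubspace hu hs (hμ s hs) hP hK₁
  have hPV : ∀ h, P₁ (V h) = V h := apply_eq_of_range_eq_cyclicSubspace hP.isIdempotentElem hK₁
  have hgen : ∀ a s h, MeasurableSet s →
      (P₁ * π a * P₁) ((P₁ * E s * P₁) (V h)) = π a (E s (V h)) := fun a s h hs => by
    rw [← mul_apply_eq_comp, hP.isIdempotentElem.conj_mul_conj_of_commute (hPπ a) (hPE s hs)]
    simp only [mul_apply_eq_comp, hPV]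
  refine ⟨fun s hs => ?_, fun s a hs => ?_, fun s a hs => ?_, ?_⟩
  · have h := hP.conj_of_commute (hdil.isStarProjection hs) (hPE s hs)
    exact ⟨h.isSelfAdjoint, h.isIdempotentElem⟩
  · rw [hdil.dilation s a hs]
    ext h
    simp only [ContinuousLinearMap.comp_apply, mul_apply_eq_comp (_ * _) (P₁ * E s * P₁),
      hgen a s h hs, mul_apply_eq_comp (π a)]
  · exact (hP.isIdempotentElem.commute_conj_of_commute (hPE s hs) (hPπ a)
      (hdil.commutes s a hs)).eq
  · rw [hP₁range]
    congr 2
    ext y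
    constructor
    · rintro ⟨a, s, h, hs, rfl⟩
      exact ⟨a, J.toFun s 1 h, by rw [hgen a s h hs, hdil.apply_apply_eq_povm hu hs (hμ s hs)]⟩
    · rintro ⟨a, h, rfl⟩
      exact ⟨a, Set.univ, h, .univ, by rw [hgen a _ h .univ, hdil.pvm.map_univ, one_apply_eq_self]⟩

/-- If the CP marginal of a unital CP instrument is an extreme UCP map and its POVM
marginal is spectral, then the compression `P₁E(A)P₁` of the minimal bi-dilation to
`𝒦₁ = [π(𝒜)Vℋ]` is a projection for every `A`; consequently
`(𝒦₁, P₁πP₁, P₁EP₁, V)` is itself a minimal bi-dilation of `ℐ`. -/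
theorem CPInstrument.compression_is_spectral_of_extreme_marginals
    {X A H K : Type*} [MeasurableSpace X]
    [NormedRing A] [StarRing A] [CStarRing A] [NormedAlgebra ℂ A] [StarModule ℂ A]
    [CompleteSpace A] [NormedAddCommGroup H] [InnerProductSpace ℂ H] [CompleteSpace H]
    [NormedAddCommGroup K] [InnerProductSpace ℂ K] [CompleteSpace K]
    (J : CPInstrument X A H) (hu : J.IsUnital)
    (π : A →⋆ₐ[ℂ] (K →L[ℂ] K)) (E : Set X → K →L[ℂ] K) (V : H →L[ℂ] K)
    (hdil : IsMinimalBiDilation J π E V)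
    (P₁ : K →L[ℂ] K)
    (hP₁sa : IsSelfAdjoint P₁) (hP₁idem : P₁ * P₁ = P₁)
    (hP₁range : LinearMap.range (P₁ : K →ₗ[ℂ] K) =
      (Submodule.span ℂ {y : K | ∃ (a : A) (h : H), y = π a (V h)}).topologicalClosure)
    (hext : IsExtremeUCPMap (J.toFun Set.univ))
    (hspec : ∀ s : Set X, MeasurableSet s → IsSelfAdjoint (J.toFun s 1) ∧
      (J.toFun s 1) * (J.toFun s 1) = J.toFun s 1) :
    (∀ s : Set X, MeasurableSet s → IsSelfAdjoint (P₁ * E s * P₁) ∧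
      (P₁ * E s * P₁) * (P₁ * E s * P₁) = P₁ * E s * P₁) ∧
    (∀ (s : Set X) (a : A), MeasurableSet s →
      J.toFun s a = (ContinuousLinearMap.adjoint V).comp
        (((P₁ * π a * P₁) * (P₁ * E s * P₁)).comp V)) ∧
    (∀ (s : Set X) (a : A), MeasurableSet s →
      (P₁ * E s * P₁) * (P₁ * π a * P₁) = (P₁ * π a * P₁) * (P₁ * E s * P₁)) ∧
    ((Submodule.span ℂ {y : K | ∃ (a : A) (s : Set X) (h : H), MeasurableSet s ∧
        y = (P₁ * π a * P₁) ((P₁ * E s * P₁) (V h))}).topologicalClosure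
      = LinearMap.range (P₁ : K →ₗ[ℂ] K)) :=
  CPInstrument.compression_is_spectral_of_extreme_marginals_general J hu π E V hdil P₁ hP₁sa hP₁idem
    hP₁range hspec
end
end

section
/- Let ℐ ∈ I_ℋ(X, 𝒜) be a unital CP instrument. Then ℐ is a C*-extreme point of I_ℋ(X, 𝒜) if and only if for every CP instrument 𝒥 : 𝒪(X) → CP(𝒜, B(ℋ)) that is dominated by ℐ and such that 𝒥(X)(1_𝒜) is invertible in B(ℋ), there exists an invertible operator S ∈ B(ℋ) such that 𝒥(A)(a) = S*ℐ(A)(a)S for all a ∈ 𝒜 and A ∈ 𝒪(X). -/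
/-!
Forward direction: if `𝒥 ≤ ℐ` and `D = 𝒥(X)(1)` is invertible, split `ℐ = ¼𝒥 + (ℐ - ¼𝒥)`.
Since `0 ≤ D ≤ 1`, both summands take strictly positive values `c₁ = ¼D` and `c₂ = 1 - ¼D`
at `(X, 1)`, and `c₁ + c₂ = 1`. Writing each summand as `√cᵢ 𝒦ᵢ √cᵢ` with the unital instrument
`𝒦ᵢ = cᵢ^{-1/2} (·) cᵢ^{-1/2}` exhibits `ℐ` as a C*-convex combination with invertible
coefficients `√cᵢ`, so C*-extremality gives a unitary `U` with `𝒦₁ = U* ℐ U`, whence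
`𝒥 = S* ℐ S` for `S = 2 U √c₁`.

Converse: in a C*-convex decomposition `ℐ = ∑ Tᵢ* ℐᵢ Tᵢ` each term is dominated by `ℐ` and takes
the invertible value `Tᵢ* Tᵢ` at `(X, 1)`, so it equals `S* ℐ S`. Then `W = S Tᵢ⁻¹` conjugates
`ℐ` to `ℐᵢ`, and evaluating at `(X, 1)` gives `W* W = 1`, so the invertible `W` is unitary.
-/

open scoped InnerProductSpace ComplexOrder
open Function

noncomputable section

open scoped NNReal

theorem IsUnit.mul_star_eq_one_of_star_mul_eq_one {R : Type*} [Monoid R] [StarMul R] {u : R}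
    (hu : IsUnit u) (h : star u * u = 1) : u * star u = 1 := by
  obtain ⟨u, rfl⟩ := hu
  rw [← Units.inv_eq_of_mul_eq_one_left h, Units.mul_inv]

namespace IsCompletelyPositive
variable {A H : Type*} [NormedRing A] [StarRing A] [NormedAlgebra ℂ A]
  [NormedAddCommGroup H] [InnerProductSpace ℂ H] {φ ψ : A →ₗ[ℂ] (H →L[ℂ] H)}

theorem map_one_nonneg (hφ : IsCompletelyPositive φ) : 0 ≤ φ 1 := by
  rw [ContinuousLinearMap.nonneg_iff_isPositive, ContinuousLinearMap.isPositive_iff_complex]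
  intro x
  have hx : 0 ≤ ⟪x, φ 1 x⟫_ℂ := by simpa using hφ 1 (fun _ => 1) (fun _ => x)
  rw [← inner_conj_symm, Complex.conj_eq_iff_im.mpr (Complex.nonneg_iff.mp hx).2.symm]
  exact ⟨(Complex.eq_re_of_ofReal_le (by exact_mod_cast hx)).symm, (Complex.nonneg_iff.mp hx).1⟩

theorem zero : IsCompletelyPositive (0 : A →ₗ[ℂ] (H →L[ℂ] H)) := by
  intro n a h
  simp

theorem add (hφ : IsCompletelyPositive φ) (hψ : IsCompletelyPositive ψ) :
    IsCompletelyPositive (φ + ψ) := by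
  intro n a h
  simpa only [LinearMap.add_apply, add_apply, inner_add_right, Finset.sum_add_distrib]
    using add_nonneg (hφ n a h) (hψ n a h)

theorem sum {ι : Type*} (s : Finset ι) {φ : ι → A →ₗ[ℂ] (H →L[ℂ] H)}
    (hφ : ∀ i ∈ s, IsCompletelyPositive (φ i)) : IsCompletelyPositive (∑ i ∈ s, φ i) :=
  Finset.sum_induction φ IsCompletelyPositive (fun _ _ => add) zero hφ

theorem smul {t : ℂ} (ht : 0 ≤ t) (hφ : IsCompletelyPositive φ) :
    IsCompletelyPositive (t • φ) := by
  intro n a h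
  simpa only [LinearMap.smul_apply, smul_apply, inner_smul_right, Finset.mul_sum]
    using mul_nonneg ht (hφ n a h)

theorem mulLeftRight_comp [CompleteSpace H] (hφ : IsCompletelyPositive φ) (T : H →L[ℂ] H) :
    IsCompletelyPositive ((LinearMap.mulLeftRight ℂ (star T, T)).comp φ) := by
  intro n a h
  simpa only [LinearMap.comp_apply, LinearMap.mulLeftRight_apply, mul_apply_eq_comp,
    ContinuousLinearMap.star_eq_adjoint, ContinuousLinearMap.adjoint_inner_right]
    using hφ n a (fun i => T (h i))

end IsCompletelyPositive

namespace CPInstrument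
variable {X A H : Type*} [MeasurableSpace X] [NormedRing A] [StarRing A] [NormedAlgebra ℂ A]
  [NormedAddCommGroup H] [InnerProductSpace ℂ H]

@[ext]
theorem ext {J J' : CPInstrument X A H} (h : J.toFun = J'.toFun) : J = J' := by
  cases J; cases J'; congr

def smul (t : ℝ≥0) (J : CPInstrument X A H) : CPInstrument X A H where
  toFun s := (t : ℂ) • J.toFun s
  cp s hs := (J.cp s hs).smul (by exact_mod_cast t.2)
  countably_additive a h k s hs hd := by
    simpa only [LinearMap.smul_apply, smul_apply, inner_smul_right]
      using (J.countably_additive a h k s hs hd).mul_left (t : ℂ)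

@[simp]
theorem smul_toFun (t : ℝ≥0) (J : CPInstrument X A H) (s : Set X) :
    (J.smul t).toFun s = (t : ℂ) • J.toFun s :=
  rfl

def sub (J J' : CPInstrument X A H) (h : J.Dominates J') : CPInstrument X A H where
  toFun s := J.toFun s - J'.toFun s
  cp := h
  countably_additive a h k s hs hd := by
    simpa only [LinearMap.sub_apply, sub_apply, inner_sub_right]
      using (J.countably_additive a h k s hs hd).sub (J'.countably_additive a h k s hs hd)

@[simp]
theorem sub_toFun (J J' : CPInstrument X A H) (h : J.Dominates J') (s : Set X) :
    (J.sub J' h).toFun s = J.toFun s - J'.toFun s :=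
  rfl

theorem Dominates.smul {J J' : CPInstrument X A H} (h : J.Dominates J') {t : ℝ≥0} (ht : t ≤ 1) :
    J.Dominates (J'.smul t) := by
  intro s hs
  have key : J.toFun s - (J'.smul t).toFun s
      = (J.toFun s - J'.toFun s) + ((1 - t : ℝ≥0) : ℂ) • J'.toFun s := by
    rw [smul_toFun, NNReal.coe_sub ht]
    push_cast
    module
  rw [key]
  exact (h s hs).add ((J'.cp s hs).smul (by exact_mod_cast (1 - t).2))

theorem dominates_of_toFun_eq_sum {ι : Type*} [Fintype ι] [DecidableEq ι]
    {J : CPInstrument X A H} {K : ι → CPInstrument X A H}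
    (hJ : ∀ s, MeasurableSet s → J.toFun s = ∑ j, (K j).toFun s)
    (i : ι) : J.Dominates (K i) := by
  intro s hs
  rw [hJ s hs, ← Finset.add_sum_erase _ _ (Finset.mem_univ i), add_sub_cancel_left]
  exact IsCompletelyPositive.sum _ fun j _ => (K j).cp s hs

variable [CompleteSpace H]

def conj (J : CPInstrument X A H) (T : H →L[ℂ] H) : CPInstrument X A H where
  toFun s := (LinearMap.mulLeftRight ℂ (star T, T)).comp (J.toFun s)
  cp s hs := (J.cp s hs).mulLeftRight_comp T
  countably_additive a h k s hs hd := by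
    simpa only [LinearMap.comp_apply, LinearMap.mulLeftRight_apply, mul_apply_eq_comp,
      ContinuousLinearMap.star_eq_adjoint, ContinuousLinearMap.adjoint_inner_right]
      using J.countably_additive a (T h) (T k) s hs hd

@[simp]
theorem conj_toFun_apply (J : CPInstrument X A H) (T : H →L[ℂ] H) (s : Set X) (a : A) :
    (J.conj T).toFun s a = star T * J.toFun s a * T :=
  rfl

theorem conj_conj (J : CPInstrument X A H) (T R : H →L[ℂ] H) :
    (J.conj T).conj R = J.conj (T * R) := by
  ext s a : 3
  simp only [conj_toFun_apply, star_mul, mul_assoc]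

theorem conj_one (J : CPInstrument X A H) : J.conj 1 = J := by
  ext s a : 3
  simp

theorem Dominates.map_one_le {J J' : CPInstrument X A H} (h : J.Dominates J') :
    J'.toFun Set.univ 1 ≤ J.toFun Set.univ 1 :=
  sub_nonneg.mp (h Set.univ MeasurableSet.univ).map_one_nonneg

def normalize (J : CPInstrument X A H) : CPInstrument X A H :=
  J.conj (Ring.inverse (CFC.sqrt (J.toFun Set.univ 1)))

variable {J : CPInstrument X A H}

theorem normalize_isUnital
    (hJ : IsStrictlyPositive (J.toFun Set.univ 1)) : J.normalize.IsUnital := by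
  set T := CFC.sqrt (J.toFun Set.univ 1)
  have hT : IsUnit T := hJ.isUnit_cfcSqrt
  have hR : star (Ring.inverse T) = Ring.inverse T := by
    rw [← Ring.inverse_star, (IsSelfAdjoint.of_nonneg (CFC.sqrt_nonneg _)).star_eq]
  have hsq : T * T = J.toFun Set.univ 1 := CFC.sqrt_mul_sqrt_self _ hJ.nonneg
  change star (Ring.inverse T) * J.toFun Set.univ 1 * Ring.inverse T = 1
  rw [hR, ← hsq, ← mul_assoc, Ring.inverse_mul_cancel _ hT, one_mul,
    Ring.mul_inverse_cancel _ hT]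

theorem normalize_conj_sqrt (hJ : IsStrictlyPositive (J.toFun Set.univ 1)) :
    J.normalize.conj (CFC.sqrt (J.toFun Set.univ 1)) = J := by
  rw [normalize, conj_conj, Ring.inverse_mul_cancel _ hJ.isUnit_cfcSqrt, conj_one]

theorem IsCstarExtreme.exists_isUnit_conj_eq_of_add (hJ : J.IsCstarExtreme)
    {J₁ J₂ : CPInstrument X A H}
    (hsum : ∀ s, MeasurableSet s → J.toFun s = J₁.toFun s + J₂.toFun s)
    (h₁ : IsStrictlyPositive (J₁.toFun Set.univ 1))
    (h₂ : IsStrictlyPositive (J₂.toFun Set.univ 1)) :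
    ∃ S : H →L[ℂ] H, IsUnit S ∧
      ∀ s a, MeasurableSet s → J₁.toFun s a = star S * J.toFun s a * S := by
  set T := ![CFC.sqrt (J₁.toFun Set.univ 1), CFC.sqrt (J₂.toFun Set.univ 1)]
  have hT_unit : ∀ i, IsUnit (T i) :=
    Fin.forall_fin_two.mpr ⟨h₁.isUnit_cfcSqrt, h₂.isUnit_cfcSqrt⟩
  have hT_star : ∀ i, star (T i) = T i := fun i =>
    (IsSelfAdjoint.of_nonneg (by fin_cases i <;> exact CFC.sqrt_nonneg _)).star_eq
  have hunital : ∀ i, (![J₁.normalize, J₂.normalize] i).IsUnital :=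
    Fin.forall_fin_two.mpr ⟨normalize_isUnital h₁, normalize_isUnital h₂⟩
  have hpartition : ∑ i, ContinuousLinearMap.adjoint (T i) * T i = 1 := by
    simp only [← ContinuousLinearMap.star_eq_adjoint, hT_star, Fin.sum_univ_two, T,
      Matrix.cons_val_zero, Matrix.cons_val_one]
    rw [CFC.sqrt_mul_sqrt_self _ h₁.nonneg, CFC.sqrt_mul_sqrt_self _ h₂.nonneg,
      ← LinearMap.add_apply, ← hsum _ .univ]
    exact hJ.1
  have hdecomp : ∀ s a, MeasurableSet s → J.toFun s a =
      ∑ i, ContinuousLinearMap.adjoint (T i) *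
        (![J₁.normalize, J₂.normalize] i).toFun s a * T i := by
    intro s a hs
    simp only [← ContinuousLinearMap.star_eq_adjoint, Fin.sum_univ_two, T, Matrix.cons_val_zero,
      Matrix.cons_val_one]
    rw [← conj_toFun_apply, ← conj_toFun_apply, normalize_conj_sqrt h₁, normalize_conj_sqrt h₂,
      hsum s hs, LinearMap.add_apply]
  obtain ⟨U, hU_left, hU_right, hN⟩ := hJ.2 2 _ T hunital hT_unit hpartition hdecomp 0
  refine ⟨U * CFC.sqrt (J₁.toFun Set.univ 1),
    IsUnit.mul ⟨⟨U, _, hU_right, hU_left⟩, rfl⟩ h₁.isUnit_cfcSqrt, fun s a hs => ?_⟩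
  conv_lhs => rw [← normalize_conj_sqrt h₁]
  have hN₁ : J₁.normalize.toFun s a = star U * J.toFun s a * U := hN s a hs
  rw [conj_toFun_apply, hN₁]
  simp only [star_mul, mul_assoc]

theorem IsCstarExtreme.exists_isUnit_conj_eq_of_dominates (hJ : J.IsCstarExtreme)
    {J' : CPInstrument X A H} (hdom : J.Dominates J') (hD : IsUnit (J'.toFun Set.univ 1)) :
    ∃ S : H →L[ℂ] H, IsUnit S ∧
      ∀ s a, MeasurableSet s → J'.toFun s a = star S * J.toFun s a * S := by
  set J₁ := J'.smul 4⁻¹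
  have hdom₁ : J.Dominates J₁ := hdom.smul (inv_le_one_of_one_le₀ (by norm_num))
  have hD_pos : IsStrictlyPositive (J'.toFun Set.univ 1) :=
    hD.isStrictlyPositive (J'.cp _ .univ).map_one_nonneg
  have h₁ : IsStrictlyPositive (J₁.toFun Set.univ 1) :=
    hD_pos.smul (Complex.zero_lt_real.mpr (by norm_num))
  have h₂ : IsStrictlyPositive ((J.sub J₁ hdom₁).toFun Set.univ 1) := by
    have hle : J'.toFun Set.univ 1 ≤ 1 := (hJ.1 : J.toFun Set.univ 1 = 1) ▸ hdom.map_one_le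
    have heq : (J.sub J₁ hdom₁).toFun Set.univ 1
        = (4⁻¹ : ℝ) • ((3 : ℝ) • 1 + (1 - J'.toFun Set.univ 1)) := by
      rw [sub_toFun, LinearMap.sub_apply, smul_toFun, LinearMap.smul_apply,
        (hJ.1 : J.toFun Set.univ 1 = 1)]
      push_cast
      module
    rw [heq]
    exact ((isStrictlyPositive_one.smul three_pos).add_nonneg (sub_nonneg.mpr hle)).smul
      (by norm_num)
  have hsum : ∀ s, MeasurableSet s → J.toFun s = J₁.toFun s + (J.sub J₁ hdom₁).toFun s :=
    fun s _ => (add_sub_cancel _ _).symm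
  obtain ⟨S, hS, hJ₁⟩ := hJ.exists_isUnit_conj_eq_of_add hsum h₁ h₂
  refine ⟨(2 : ℂ) • S, (isUnit_smul_iff (Units.mk0 (2 : ℂ) two_ne_zero) S).mpr hS,
    fun s a hs => ?_⟩
  have h4 : J'.toFun s a = (4 : ℂ) • J₁.toFun s a := by
    simp [J₁, smul_smul]
  rw [h4, hJ₁ s a hs]
  simp only [star_smul, smul_mul_assoc, mul_smul_comm, smul_smul]
  norm_num

theorem isCstarExtreme_of_dominates (hu : J.IsUnital)
    (h : ∀ J' : CPInstrument X A H, J.Dominates J' → IsUnit (J'.toFun Set.univ 1) →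
      ∃ S : H →L[ℂ] H, IsUnit S ∧
        ∀ s a, MeasurableSet s → J'.toFun s a = star S * J.toFun s a * S) :
    J.IsCstarExtreme := by
  classical
  refine ⟨hu, fun n Js T hJs hT _ hmix i => ?_⟩
  have hdom : J.Dominates ((Js i).conj (T i)) :=
    dominates_of_toFun_eq_sum (K := fun j => (Js j).conj (T j))
      (fun s hs => LinearMap.ext fun a => by
        simp [hmix s a hs, ContinuousLinearMap.star_eq_adjoint]) i
  have hunit : IsUnit (((Js i).conj (T i)).toFun Set.univ 1) := by
    rw [conj_toFun_apply, hJs i, mul_one]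
    exact (hT i).star.mul (hT i)
  obtain ⟨S, hS, hconj⟩ := h _ hdom hunit
  set W := S * Ring.inverse (T i)
  have hJsW : ∀ s a, MeasurableSet s → (Js i).toFun s a = star W * J.toFun s a * W := by
    intro s a hs
    have hinv : ((Js i).conj (T i)).conj (Ring.inverse (T i)) = Js i := by
      rw [conj_conj, Ring.mul_inverse_cancel _ (hT i), conj_one]
    rw [← hinv, conj_toFun_apply, hconj s a hs]
    simp only [W, star_mul, mul_assoc]
  have hW : star W * W = 1 := by
    have h_univ := hJsW _ 1 .univ
    rwa [hJs i, hu, mul_one, eq_comm] at h_univ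
  simp only [← ContinuousLinearMap.star_eq_adjoint]
  exact ⟨W, hW, (hS.mul (hT i).ringInverse).mul_star_eq_one_of_star_mul_eq_one hW, hJsW⟩

end CPInstrument

theorem CPInstrument.cstarExtreme_iff_dominated_conjugate_general
    {X A H : Type*} [MeasurableSpace X]
    [NormedRing A] [StarRing A] [NormedAlgebra ℂ A]
    [NormedAddCommGroup H] [InnerProductSpace ℂ H] [CompleteSpace H]
    (J : CPInstrument X A H) (hu : J.IsUnital) :
    J.IsCstarExtreme ↔
      ∀ J' : CPInstrument X A H, J.Dominates J' → IsUnit (J'.toFun Set.univ 1) →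
        ∃ S : H →L[ℂ] H, IsUnit S ∧
          ∀ (s : Set X) (a : A), MeasurableSet s →
            J'.toFun s a = ContinuousLinearMap.adjoint S * (J.toFun s a) * S := by
  simp only [← ContinuousLinearMap.star_eq_adjoint]
  exact ⟨fun hJ _ => hJ.exists_isUnit_conj_eq_of_dominates, isCstarExtreme_of_dominates hu⟩

/-- A unital CP instrument `ℐ` is C*-extreme in `I_ℋ(X, 𝒜)` iff every CP instrument `𝒥`
dominated by `ℐ` with `𝒥(X)(1)` invertible is of the form `𝒥(A)(a) = S* ℐ(A)(a) S` for
some invertible `S ∈ B(ℋ)`. -/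
theorem CPInstrument.cstarExtreme_iff_dominated_conjugate
    {X A H : Type*} [MeasurableSpace X]
    [NormedRing A] [StarRing A] [CStarRing A] [NormedAlgebra ℂ A] [StarModule ℂ A]
    [CompleteSpace A] [NormedAddCommGroup H] [InnerProductSpace ℂ H] [CompleteSpace H]
    (J : CPInstrument X A H) (hu : J.IsUnital) :
    J.IsCstarExtreme ↔
      ∀ J' : CPInstrument X A H, J.Dominates J' → IsUnit (J'.toFun Set.univ 1) →
        ∃ S : H →L[ℂ] H, IsUnit S ∧
          ∀ (s : Set X) (a : A), MeasurableSet s →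
            J'.toFun s a = ContinuousLinearMap.adjoint S * (J.toFun s a) * S :=
  CPInstrument.cstarExtreme_iff_dominated_conjugate_general J hu
end
end
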